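/- Let f : X × Y × Z → W be a bounded trilinear map between Banach spaces. Then the flip map fⁱ : Y × X × Z → W is close-to-regular if and only if f^{j****j} = f^{r****r}. -/
import Mathlib


open Filter Topology ContinuousLinearMap

set_option maxSynthPendingDepth 3
set_option synthInstance.maxHeartbeats 1000000
set_option maxHeartbeats 4000000

noncomputable section

section Defs

variable {A B C D : Type*}
  [NormedAddCommGroup A] [NormedSpace ℝ A]
  [NormedAddCommGroup B] [NormedSpace ℝ B]
  [NormedAddCommGroup C] [NormedSpace ℝ C]
  [NormedAddCommGroup D] [NormedSpace ℝ D]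

/-- The adjoint `g*` of a bounded trilinear map `g : A × B × C → D`, i.e. the bounded
trilinear map `g* : D* × A × B → C*` determined by `⟨g*(d*,a,b), c⟩ = ⟨d*, g(a,b,c)⟩`. -/
def triAdj (f : A →L[ℝ] B →L[ℝ] C →L[ℝ] D) :
    (D →L[ℝ] ℝ) →L[ℝ] A →L[ℝ] B →L[ℝ] C →L[ℝ] ℝ :=
  (((compL ℝ A (B →L[ℝ] C →L[ℝ] D) (B →L[ℝ] C →L[ℝ] ℝ)).comp
      (compL ℝ B (C →L[ℝ] D) (C →L[ℝ] ℝ))).comp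
      (compL ℝ C D ℝ)).flip f

lemma triAdj_apply (f : A →L[ℝ] B →L[ℝ] C →L[ℝ] D) (d' : D →L[ℝ] ℝ) (a : A) (b : B) (c : C) :
    triAdj f d' a b c = d' (f a b c) := rfl

/-- Flip of the first two arguments: `fⁱ(b,a,c) = f(a,b,c)`. -/
def flipI (f : A →L[ℝ] B →L[ℝ] C →L[ℝ] D) : B →L[ℝ] A →L[ℝ] C →L[ℝ] D := f.flip

/-- Flip of the last two arguments: `fʲ(a,c,b) = f(a,b,c)`. -/
def flipJ (f : A →L[ℝ] B →L[ℝ] C →L[ℝ] D) : A →L[ℝ] C →L[ℝ] B →L[ℝ] D :=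
  ((ContinuousLinearMap.flipₗᵢ ℝ B C D).toLinearIsometry.toContinuousLinearMap).comp f

lemma flipJ_apply (f : A →L[ℝ] B →L[ℝ] C →L[ℝ] D) (a : A) (c : C) (b : B) :
    flipJ f a c b = f a b c := rfl

/-- The cyclic flip `fᵗ(c,a,b) = f(a,b,c)`. -/
def flipT (f : A →L[ℝ] B →L[ℝ] C →L[ℝ] D) : C →L[ℝ] A →L[ℝ] B →L[ℝ] D := flipI (flipJ f)

/-- The cyclic flip `fˢ(b,c,a) = f(a,b,c)`. -/
def flipS (f : A →L[ℝ] B →L[ℝ] C →L[ℝ] D) : B →L[ℝ] C →L[ℝ] A →L[ℝ] D := flipJ (flipI f)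

/-- The full reversal `fʳ(c,b,a) = f(a,b,c)`. -/
def flipR (f : A →L[ℝ] B →L[ℝ] C →L[ℝ] D) : C →L[ℝ] B →L[ℝ] A →L[ℝ] D :=
  flipJ (flipI (flipJ f))

/-- The fourth adjoint `g**** : A** × B** × C** → D**`, which extends `g` to the biduals. -/
def triAdj4 (f : A →L[ℝ] B →L[ℝ] C →L[ℝ] D) :
    ((A →L[ℝ] ℝ) →L[ℝ] ℝ) →L[ℝ] ((B →L[ℝ] ℝ) →L[ℝ] ℝ) →L[ℝ] ((C →L[ℝ] ℝ) →L[ℝ] ℝ) →L[ℝ]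
      ((D →L[ℝ] ℝ) →L[ℝ] ℝ) :=
  triAdj (triAdj (triAdj (triAdj f)))

/-- The Aron–Berner extension `f****`. -/
def ext0 (f : A →L[ℝ] B →L[ℝ] C →L[ℝ] D) := triAdj4 f

/-- The Aron–Berner extension `f^{i****i}`:
`f^{i****i}(a**,b**,c**) = (fⁱ)****(b**,a**,c**)`. -/
def extI (f : A →L[ℝ] B →L[ℝ] C →L[ℝ] D) := flipI (triAdj4 (flipI f))

/-- The Aron–Berner extension `f^{j****j}`:
`f^{j****j}(a**,b**,c**) = (fʲ)****(a**,c**,b**)`. -/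
def extJ (f : A →L[ℝ] B →L[ℝ] C →L[ℝ] D) := flipJ (triAdj4 (flipJ f))

/-- The Aron–Berner extension `f^{r****r}`:
`f^{r****r}(a**,b**,c**) = (fʳ)****(c**,b**,a**)`. -/
def extR (f : A →L[ℝ] B →L[ℝ] C →L[ℝ] D) := flipR (triAdj4 (flipR f))

/-- The Aron–Berner extension `f^{t****s}`:
`f^{t****s}(a**,b**,c**) = (fᵗ)****(c**,a**,b**)`. -/
def extTS (f : A →L[ℝ] B →L[ℝ] C →L[ℝ] D) := flipS (triAdj4 (flipT f))

/-- The Aron–Berner extension `f^{s****t}`: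
`f^{s****t}(a**,b**,c**) = (fˢ)****(b**,c**,a**)`. -/
def extST (f : A →L[ℝ] B →L[ℝ] C →L[ℝ] D) := flipT (triAdj4 (flipS f))

/-- `f` is Aron–Berner regular when all six natural extensions coincide. -/
def AronBernerRegular (f : A →L[ℝ] B →L[ℝ] C →L[ℝ] D) : Prop :=
  ext0 f = extI f ∧ ext0 f = extJ f ∧ ext0 f = extR f ∧ ext0 f = extTS f ∧ ext0 f = extST f

/-- `f` is close-to-regular when `f^{t****s} = f^{s****t}`. -/
def CloseToRegular (f : A →L[ℝ] B →L[ℝ] C →L[ℝ] D) : Prop := extTS f = extST f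

end Defs


section Aux

variable {A B C D : Type*}
  [NormedAddCommGroup A] [NormedSpace ℝ A]
  [NormedAddCommGroup B] [NormedSpace ℝ B]
  [NormedAddCommGroup C] [NormedSpace ℝ C]
  [NormedAddCommGroup D] [NormedSpace ℝ D]

lemma flipI_flipI (f : A →L[ℝ] B →L[ℝ] C →L[ℝ] D) : flipI (flipI f) = f := by
  ext a b c; rfl

lemma flipT_flipI (f : A →L[ℝ] B →L[ℝ] C →L[ℝ] D) : flipT (flipI f) = flipR f := by
  ext a b c; rfl

lemma flipS_flipI (f : A →L[ℝ] B →L[ℝ] C →L[ℝ] D) : flipS (flipI f) = flipJ f := by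
  ext a b c; rfl

lemma flipI_flipT (f : A →L[ℝ] B →L[ℝ] C →L[ℝ] D) : flipI (flipT f) = flipJ f := by
  ext a b c; rfl

lemma flipI_flipS (f : A →L[ℝ] B →L[ℝ] C →L[ℝ] D) : flipI (flipS f) = flipR f := by
  ext a b c; rfl

lemma flipI_inj {f g : A →L[ℝ] B →L[ℝ] C →L[ℝ] D} (h : flipI f = flipI g) : f = g := by
  have := congrArg flipI h
  rwa [flipI_flipI, flipI_flipI] at this

end Aux

theorem flipI_closeToRegular_iff_extJ_eq_extR {X Y Z W : Type*}
    [NormedAddCommGroup X] [NormedSpace ℝ X] [CompleteSpace X]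
    [NormedAddCommGroup Y] [NormedSpace ℝ Y] [CompleteSpace Y]
    [NormedAddCommGroup Z] [NormedSpace ℝ Z] [CompleteSpace Z]
    [NormedAddCommGroup W] [NormedSpace ℝ W] [CompleteSpace W]
    (f : X →L[ℝ] Y →L[ℝ] Z →L[ℝ] W) :
    CloseToRegular (flipI f) ↔ extJ f = extR f := by
  unfold CloseToRegular extTS extST extJ extR
  rw [flipT_flipI, flipS_flipI]
  constructor
  · intro h
    have := congrArg flipI h
    rw [flipI_flipS, flipI_flipT] at this
    exact this.symm
  · intro h
    apply flipI_inj
    rw [flipI_flipS, flipI_flipT]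
    exact h.symm


end
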